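/- arXiv:1306.6739 — 3 statements merged into one kernel-verified Lean document; each statement's English description precedes it below -/
import Mathlib

section
/- Let Δ ∈ ℝ^{n×n} be nonnegative with ρ(Δ) < 1 and with diagonal entries Δ_ii < 1. Then for each i, the diagonal entry d_i := ((I−Δ)^{-1})_{ii} satisfies d_i ≥ (1+Δ_ii) / (1 − (Δ²)_{ii}). -/
/-!
By Gelfand's formula, `ρ(Δ) < 1` makes `‖Δ ^ k‖` decay geometrically, so the Neumann series
`∑ Δ ^ k` converges to `(1 - Δ)⁻¹`. For nonnegative `Δ`, dropping all but one term of each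
matrix product gives `(Δ ^ (2m)) i i ≥ b ^ m` and `(Δ ^ (2m+1)) i i ≥ Δ i i * b ^ m` with
`b = (Δ * Δ) i i`. Summing the even and odd terms separately bounds the diagonal of the
Neumann series below by `(1 + Δ i i) * ∑ b ^ m`, and its convergence forces `b < 1`.
-/

open Filter Topology

theorem Real.summable_of_tendsto_rpow_one_div_lt_one {u : ℕ → ℝ} {r : ℝ} (hu : ∀ n, 0 ≤ u n)
    (h : Tendsto (fun n : ℕ => u n ^ (1 / n : ℝ)) atTop (𝓝 r)) (hr : r < 1) : Summable u := by
  have hr0 : 0 ≤ r := ge_of_tendsto' h fun n => Real.rpow_nonneg (hu n) _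
  obtain ⟨c, hrc, hc1⟩ := exists_between hr
  refine .of_norm_bounded_eventually_nat (summable_geometric_of_lt_one (hr0.trans hrc.le) hc1) ?_
  filter_upwards [h.eventually_lt_const hrc, eventually_ne_atTop 0] with n hn hn0
  rw [Real.norm_of_nonneg (hu n), ← Real.rpow_inv_natCast_pow (hu n) hn0, ← one_div]
  exact pow_le_pow_left₀ (Real.rpow_nonneg (hu n) _) hn.le n

theorem spectrum.summable_norm_pow_of_spectralRadius_lt_one {A : Type*} [NormedRing A]
    [NormedAlgebra ℂ A] [CompleteSpace A] {a : A} (h : spectralRadius ℂ a < 1) :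
    Summable fun n : ℕ => ‖a ^ n‖ := by
  have hρ : spectralRadius ℂ a ≠ ⊤ := (h.trans ENNReal.one_lt_top).ne
  refine Real.summable_of_tendsto_rpow_one_div_lt_one (fun n => norm_nonneg _) ?_
    ((ENNReal.toReal_lt_toReal hρ ENNReal.one_ne_top).mpr h)
  refine ((ENNReal.tendsto_toReal hρ).comp
    (pow_norm_pow_one_div_tendsto_nhds_spectralRadius a)).congr fun n => ?_
  exact ENNReal.toReal_ofReal (Real.rpow_nonneg (norm_nonneg _) _)

namespace Matrix

section Nonneg

variable {l m n R : Type*} [CommSemiring R] [PartialOrder R] [IsOrderedRing R]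

theorem apply_mul_apply_le_mul_apply [Fintype m] {A : Matrix l m R} {B : Matrix m n R}
    (hA : ∀ i j, 0 ≤ A i j) (hB : ∀ i j, 0 ≤ B i j) (i : l) (j : m) (k : n) :
    A i j * B j k ≤ (A * B) i k :=
  Finset.single_le_sum (f := fun j => A i j * B j k) (fun j _ => mul_nonneg (hA i j) (hB j k))
    (Finset.mem_univ j)

variable [Fintype n] [DecidableEq n] {A : Matrix n n R}

theorem apply_self_pow_le_pow_apply (hA : ∀ i j, 0 ≤ A i j) (i : n) (k : ℕ) :
    A i i ^ k ≤ (A ^ k) i i := by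
  induction k with
  | zero => simp
  | succ k ih =>
    rw [pow_succ, pow_succ]
    exact (mul_le_mul_of_nonneg_right ih (hA i i)).trans
      (apply_mul_apply_le_mul_apply (pow_apply_nonneg hA k) hA i i i)

theorem mul_apply_self_pow_le_pow_two_mul_apply (hA : ∀ i j, 0 ≤ A i j) (i : n) (m : ℕ) :
    (A * A) i i ^ m ≤ (A ^ (2 * m)) i i := by
  rw [pow_mul, sq]
  exact apply_self_pow_le_pow_apply (by simpa [sq] using pow_apply_nonneg hA 2) i m

theorem apply_self_mul_mul_apply_self_pow_le_pow_two_mul_add_one_apply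
    (hA : ∀ i j, 0 ≤ A i j) (i : n) (m : ℕ) :
    A i i * (A * A) i i ^ m ≤ (A ^ (2 * m + 1)) i i := by
  rw [mul_comm, pow_succ]
  exact
    (mul_le_mul_of_nonneg_right (mul_apply_self_pow_le_pow_two_mul_apply hA i m) (hA i i)).trans
      (apply_mul_apply_le_mul_apply (pow_apply_nonneg hA _) hA i i i)

end Nonneg

section LinftyOpNorm

-- Any Banach algebra norm on complex matrices would do; Gelfand's formula just needs one.
attribute [local instance] Matrix.linftyOpNormedRing Matrix.linftyOpNormedAlgebra

theorem summable_pow_of_forall_mem_spectrum_norm_lt_one {n : Type*} [Fintype n] [DecidableEq n]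
    [Nonempty n] {A : Matrix n n ℝ} (h : ∀ μ ∈ spectrum ℂ (A.map Complex.ofReal), ‖μ‖ < 1) :
    Summable (A ^ ·) := by
  have hρ : spectralRadius ℂ (A.map Complex.ofReal) < 1 := by
    exact_mod_cast spectrum.spectralRadius_lt_of_forall_lt _ (r := 1) fun μ hμ => by
      exact_mod_cast h μ hμ
  have hM := (spectrum.summable_norm_pow_of_spectralRadius_lt_one hρ).of_norm
  refine Pi.summable.mpr fun p => Pi.summable.mpr fun q => ?_
  have hpow : ∀ k, A.map Complex.ofReal ^ k = (A ^ k).map Complex.ofReal := fun k =>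
    (A.map_pow Complex.ofRealHom k).symm
  rw [← Complex.summable_ofReal]
  simpa [hpow] using Pi.summable.mp (Pi.summable.mp hM p) q

end LinftyOpNorm

theorem inv_one_sub_apply_eq_tsum_pow_apply {n R : Type*} [Fintype n] [DecidableEq n] [CommRing R]
    [TopologicalSpace R] [IsTopologicalRing R] [T2Space R] {A : Matrix n n R}
    (h : Summable (A ^ ·)) (i j : n) : (1 - A)⁻¹ i j = ∑' k, (A ^ k) i j := by
  rw [inv_eq_right_inv h.one_sub_mul_tsum_pow]
  exact (congrFun (tsum_apply (x := i) h) j).trans (tsum_apply (x := j) (Pi.summable.mp h i))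

theorem div_le_tsum_pow_apply_self {n : Type*} [Fintype n] [DecidableEq n] {A : Matrix n n ℝ}
    (hA : ∀ i j, 0 ≤ A i j) (i : n) (hs : Summable fun k => (A ^ k) i i) :
    (1 + A i i) / (1 - (A * A) i i) ≤ ∑' k, (A ^ k) i i := by
  have hse : Summable fun m => (A ^ (2 * m)) i i :=
    hs.comp_injective (mul_right_injective₀ two_ne_zero)
  have hso : Summable fun m => (A ^ (2 * m + 1)) i i :=
    hs.comp_injective fun _ _ h => by omega
  have hb0 : 0 ≤ (A * A) i i := by simpa [sq] using pow_apply_nonneg hA 2 i i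
  have hb1 : (A * A) i i < 1 := by
    have hgeo : Summable ((A * A) i i ^ ·) :=
      .of_nonneg_of_le (pow_nonneg hb0) (mul_apply_self_pow_le_pow_two_mul_apply hA i) hse
    simpa [abs_of_nonneg hb0] using summable_geometric_iff_norm_lt_one.mp hgeo
  have hgeo := summable_geometric_of_lt_one hb0 hb1
  calc (1 + A i i) / (1 - (A * A) i i)
      = ∑' m, (A * A) i i ^ m + ∑' m, A i i * (A * A) i i ^ m := by
        rw [tsum_mul_left, tsum_geometric_of_lt_one hb0 hb1]
        field_simp
    _ ≤ ∑' m, (A ^ (2 * m)) i i + ∑' m, (A ^ (2 * m + 1)) i i :=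
        add_le_add (hgeo.tsum_le_tsum (mul_apply_self_pow_le_pow_two_mul_apply hA i) hse)
          ((hgeo.mul_left _).tsum_le_tsum
            (apply_self_mul_mul_apply_self_pow_le_pow_two_mul_add_one_apply hA i) hso)
    _ = ∑' k, (A ^ k) i i := tsum_even_add_odd (f := fun k => (A ^ k) i i) hse hso

end Matrix

theorem diag_inverse_lower_bound_general
    (n : ℕ) (Δ : Matrix (Fin n) (Fin n) ℝ)
    (hnn : ∀ i j, 0 ≤ Δ i j)
    (hρ : ∀ μ ∈ spectrum ℂ (Δ.map Complex.ofReal), ‖μ‖ < 1) :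
    ∀ i, (1 + Δ i i) / (1 - (Δ * Δ) i i) ≤ (1 - Δ)⁻¹ i i := by
  intro i
  have : Nonempty (Fin n) := ⟨i⟩
  have hs := Matrix.summable_pow_of_forall_mem_spectrum_norm_lt_one hρ
  rw [Matrix.inv_one_sub_apply_eq_tsum_pow_apply hs]
  exact Matrix.div_le_tsum_pow_apply_self hnn i (Pi.summable.mp (Pi.summable.mp hs i) i)

/-- For `Δ ≥ 0` with `ρ(Δ) < 1` and `Δ i i < 1`, the diagonal entries of
`(I-Δ)⁻¹` satisfy `d_i ≥ (1+Δ_ii)/(1-(Δ²)_ii)`. -/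
theorem diag_inverse_lower_bound
    (n : ℕ) (Δ : Matrix (Fin n) (Fin n) ℝ)
    (hnn : ∀ i j, 0 ≤ Δ i j)
    (hρ : ∀ μ ∈ spectrum ℂ (Δ.map Complex.ofReal), ‖μ‖ < 1)
    (hdiag : ∀ i, Δ i i < 1) :
    ∀ i, (1 + Δ i i) / (1 - (Δ * Δ) i i) ≤ (1 - Δ)⁻¹ i i :=
  diag_inverse_lower_bound_general n Δ hnn hρ
end

section
/- Let Δ ∈ ℝ^{n×n} be nonnegative with ρ(Δ) < 1 and Δ_ii < 1 for all i. Set d_i := ((I−Δ)^{-1})_{ii}. Then α_i := (1−Δ_ii) − 1/d_i ≥ 0 for every i. -/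
/-!
Since every eigenvalue of `Δ` lies in the open unit disc, Gelfand's formula makes the Neumann
series `∑ Δ ^ k` converge, to `(1 - Δ)⁻¹`; as a limit of nonnegative matrices this inverse is
entrywise nonnegative. The `(i, i)` entry of `(1 - Δ)⁻¹ * (1 - Δ) = 1` reads
`dᵢ (1 - Δᵢᵢ) - ∑_{k ≠ i} ((1 - Δ)⁻¹)ᵢₖ Δₖᵢ = 1`, so `dᵢ (1 - Δᵢᵢ) ≥ 1`, which is `αᵢ ≥ 0`.
-/

open Filter

theorem summable_pow_of_spectralRadius_lt_one {A : Type*} [NormedRing A] [NormedAlgebra ℂ A]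
    [CompleteSpace A] {a : A} (h : spectralRadius ℂ a < 1) : Summable (a ^ ·) := by
  obtain ⟨r, hρr, hr1⟩ := ENNReal.lt_iff_exists_nnreal_btwn.mp h
  have hroot :=
    (spectrum.pow_nnnorm_pow_one_div_tendsto_nhds_spectralRadius a).eventually_lt_const hρr
  have hpow : ∀ᶠ k : ℕ in atTop, ‖a ^ k‖ ≤ (r : ℝ) ^ k := by
    filter_upwards [hroot, eventually_ne_atTop 0] with k hk hk0
    rw [one_div, ENNReal.rpow_inv_lt_iff (by positivity), ENNReal.rpow_natCast] at hk
    exact_mod_cast hk.le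
  exact .of_norm_bounded_eventually_nat
    (summable_geometric_of_lt_one r.coe_nonneg (by exact_mod_cast hr1)) hpow

namespace Matrix

variable {n : Type*} [Fintype n] [DecidableEq n]

theorem summable_pow_of_forall_spectrum_norm_lt_one {A : Matrix n n ℂ}
    (h : ∀ z ∈ spectrum ℂ A, ‖z‖ < 1) : Summable (A ^ ·) := by
  -- Gelfand's formula needs a Banach-algebra norm; this one induces the usual topology.
  let := Matrix.linftyOpNormedRing (n := n) (α := ℂ)
  let := Matrix.linftyOpNormedAlgebra (n := n) (R := ℂ) (α := ℂ)
  cases isEmpty_or_nonempty n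
  · exact summable_zero.congr fun _ => Subsingleton.elim _ _
  · refine summable_pow_of_spectralRadius_lt_one ?_
    simpa using spectrum.spectralRadius_lt_of_forall_lt (r := 1) A fun z hz => by
      simpa [← NNReal.coe_lt_coe] using h z hz

theorem summable_pow_of_summable_pow_map_ofReal {A : Matrix n n ℝ}
    (hA : Summable ((A.map Complex.ofReal) ^ ·)) : Summable (A ^ ·) := by
  have hre := hA.map Complex.reAddGroupHom.mapMatrix
    (continuous_id.matrix_map Complex.continuous_re)
  convert hre using 2 with k
  have : A.map Complex.ofReal ^ k = (A ^ k).map Complex.ofReal :=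
    (map_pow Complex.ofRealHom.mapMatrix A k).symm
  ext i j
  simp [this]

theorem inv_one_sub_eq_tsum_pow {R : Type*} [CommRing R] [TopologicalSpace R]
    [IsTopologicalRing R] [T2Space R] {A : Matrix n n R} (hA : Summable (A ^ ·)) :
    (1 - A)⁻¹ = ∑' k, A ^ k :=
  inv_eq_right_inv hA.one_sub_mul_tsum_pow

theorem entry_pow_nonneg {R : Type*} [Semiring R] [PartialOrder R] [IsOrderedRing R]
    {A : Matrix n n R} (hA : ∀ i j, 0 ≤ A i j) (k : ℕ) (i j : n) : 0 ≤ (A ^ k) i j := by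
  induction k generalizing j with
  | zero => by_cases h : i = j <;> simp [h]
  | succ k ih =>
    rw [pow_succ, mul_apply]
    exact Finset.sum_nonneg fun l _ => mul_nonneg (ih l) (hA l j)

theorem inv_one_sub_entry_nonneg {A : Matrix n n ℝ} (hA : Summable (A ^ ·))
    (hnn : ∀ i j, 0 ≤ A i j) (i j : n) : 0 ≤ (1 - A)⁻¹ i j := by
  rw [inv_one_sub_eq_tsum_pow hA]
  exact (Pi.hasSum.mp (Pi.hasSum.mp hA.hasSum i) j).nonneg fun k => entry_pow_nonneg hnn k i j

theorem one_le_diag_mul_one_sub_diag {R : Type*} [CommRing R] [PartialOrder R]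
    [IsOrderedRing R] {A B : Matrix n n R} (hA : ∀ i j, 0 ≤ A i j) (hB : ∀ i j, 0 ≤ B i j)
    (hBA : B * (1 - A) = 1) (i : n) : 1 ≤ B i i * (1 - A i i) := by
  have hrow : B i i * (1 - A i i) - ∑ k ∈ Finset.univ.erase i, B i k * A k i = 1 := by
    have := congrFun (congrFun hBA i) i
    rw [mul_sub, sub_apply, mul_one, mul_apply,
      ← Finset.add_sum_erase _ _ (Finset.mem_univ i)] at this
    simpa [mul_sub] using this
  have hoff : 0 ≤ ∑ k ∈ Finset.univ.erase i, B i k * A k i :=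
    Finset.sum_nonneg fun k _ => mul_nonneg (hB i k) (hA k i)
  calc 1 = _ := hrow.symm
    _ ≤ B i i * (1 - A i i) := sub_le_self _ hoff

end Matrix

theorem alpha_nonneg_general
    (n : ℕ) (Δ : Matrix (Fin n) (Fin n) ℝ)
    (hnn : ∀ i j, 0 ≤ Δ i j)
    (hρ : ∀ μ ∈ spectrum ℂ (Δ.map Complex.ofReal), ‖μ‖ < 1) :
    ∀ i, 0 ≤ (1 - Δ i i) - 1 / ((1 - Δ)⁻¹ i i) := by
  intro i
  have hsum : Summable (Δ ^ ·) := Matrix.summable_pow_of_summable_pow_map_ofReal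
    (Matrix.summable_pow_of_forall_spectrum_norm_lt_one hρ)
  have hinv : (1 - Δ)⁻¹ * (1 - Δ) = 1 := by
    rw [Matrix.inv_one_sub_eq_tsum_pow hsum]
    exact hsum.tsum_pow_mul_one_sub
  have hB := Matrix.inv_one_sub_entry_nonneg hsum hnn
  have hdiag := Matrix.one_le_diag_mul_one_sub_diag hnn hB hinv i
  have hd : 0 < (1 - Δ)⁻¹ i i := (hB i i).lt_of_ne fun h => by norm_num [← h] at hdiag
  rw [sub_nonneg, div_le_iff₀ hd, mul_comm]
  exact hdiag

/-- The Ning–Kearfott parameter `α_i = (1-Δ_ii) - 1/d_i` is nonnegative,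
where `d_i = ((I-Δ)⁻¹)_ii`. -/
theorem alpha_nonneg
    (n : ℕ) (Δ : Matrix (Fin n) (Fin n) ℝ)
    (hnn : ∀ i j, 0 ≤ Δ i j)
    (hρ : ∀ μ ∈ spectrum ℂ (Δ.map Complex.ofReal), ‖μ‖ < 1)
    (hdiag : ∀ i, Δ i i < 1) :
    ∀ i, 0 ≤ (1 - Δ i i) - 1 / ((1 - Δ)⁻¹ i i) :=
  alpha_nonneg_general n Δ hnn hρ
end

section
/- Let A be an n×n interval matrix with mid(A) = I_n and ρ(rad(A)) < 1, and b an interval vector. Then the solution set Σ := {x : ∃A∈A, ∃b∈b, Ax = b} is bounded, and its magnitude satisfies mag(Σ)_i ≤ u_i for all i, where u := ⟨A⟩^{-1} mag(b) = (I − rad(A))^{-1} mag(b). -/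
/-!
Since `mid A = I`, every `A` in the box satisfies `|A - I| ≤ rad A =: Δ` entrywise, so a solution
of `A x = b` satisfies `|x| ≤ |b| + Δ |x| ≤ mag b + Δ |x|`. By Gelfand's formula `ρ(Δ) < 1` forces
`Δ ^ k → 0`; hence `I - Δ` is invertible, and `z := (I - Δ)⁻¹ mag b - |x|` satisfies `Δ z ≤ z`.
As `Δ ≥ 0` this iterates to `Δ ^ k z ≤ z`, and letting `k → ∞` gives `z ≥ 0`, i.e. `|x| ≤ u`.
-/

open Filter Topology

theorem tendsto_pow_nhds_zero_of_spectralRadius_lt_one {A : Type*} [NormedRing A]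
    [NormedAlgebra ℂ A] [CompleteSpace A] {a : A} (ha : spectralRadius ℂ a < 1) :
    Tendsto (a ^ ·) atTop (𝓝 0) := by
  obtain ⟨r, har, hr1⟩ := ENNReal.lt_iff_exists_nnreal_btwn.mp ha
  have hr1 : (r : ℝ) < 1 := by exact_mod_cast ENNReal.coe_lt_one_iff.mp hr1
  refine squeeze_zero_norm' ?_ (tendsto_pow_atTop_nhds_zero_of_lt_one r.coe_nonneg hr1)
  have hgelfand := spectrum.pow_nnnorm_pow_one_div_tendsto_nhds_spectralRadius a
  filter_upwards [hgelfand.eventually_lt_const har, eventually_ge_atTop 1] with k hk hk1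
  have hk0 : (0 : ℝ) < k := by exact_mod_cast hk1
  have hpow := ENNReal.rpow_lt_rpow hk hk0
  rw [← ENNReal.rpow_mul, one_div, inv_mul_cancel₀ hk0.ne', ENNReal.rpow_one,
    ENNReal.rpow_natCast, ← ENNReal.coe_pow, ENNReal.coe_lt_coe] at hpow
  exact_mod_cast hpow.le

theorem tendsto_pow_nhds_zero_of_forall_spectrum_norm_lt_one {A : Type*} [NormedRing A]
    [NormedAlgebra ℂ A] [CompleteSpace A] {a : A} (ha : ∀ z ∈ spectrum ℂ a, ‖z‖ < 1) :
    Tendsto (a ^ ·) atTop (𝓝 0) := by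
  rcases subsingleton_or_nontrivial A with _ | _
  · simp [Subsingleton.elim _ (0 : A)]
  · refine tendsto_pow_nhds_zero_of_spectralRadius_lt_one ?_
    exact_mod_cast spectrum.spectralRadius_lt_of_forall_lt a (r := 1) fun z hz => by
      exact_mod_cast ha z hz

namespace Matrix

variable {ι : Type*} [Fintype ι]

theorem tendsto_pow_nhds_zero_of_forall_spectrum_norm_lt_one [DecidableEq ι] {M : Matrix ι ι ℝ}
    (hM : ∀ z ∈ spectrum ℂ (M.map Complex.ofReal), ‖z‖ < 1) :
    Tendsto (M ^ ·) atTop (𝓝 0) := by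
  -- The ℓ∞ operator norm makes `Matrix ι ι ℂ` a Banach algebra whose topology is the entrywise one.
  let _ := Matrix.linftyOpNormedRing (n := ι) (α := ℂ)
  let _ := Matrix.linftyOpNormedAlgebra (n := ι) (α := ℂ) (R := ℂ)
  have hc := _root_.tendsto_pow_nhds_zero_of_forall_spectrum_norm_lt_one hM
  have hre : Continuous fun N : Matrix ι ι ℂ => N.map Complex.re :=
    continuous_id.matrix_map Complex.continuous_re
  convert (hre.tendsto 0).comp hc using 1
  · ext k : 1
    change M ^ k = (Complex.ofRealHom.mapMatrix M ^ k).map Complex.re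
    rw [← map_pow, RingHom.mapMatrix_apply, map_map]
    ext i j
    simp
  · simp

theorem mulVec_le_mulVec_of_nonneg {α : Type*} [Semiring α] [PartialOrder α] [IsOrderedRing α]
    {M : Matrix ι ι α} (hM : ∀ i j, 0 ≤ M i j) {v w : ι → α} (hvw : v ≤ w) :
    M *ᵥ v ≤ M *ᵥ w := fun i =>
  Finset.sum_le_sum fun j _ => mul_le_mul_of_nonneg_left (hvw j) (hM i j)

theorem abs_mulVec_le_mulVec_abs {α : Type*} [Ring α] [LinearOrder α] [IsStrictOrderedRing α]
    {B C : Matrix ι ι α} (hBC : ∀ i j, |B i j| ≤ C i j) (x : ι → α) :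
    |B *ᵥ x| ≤ C *ᵥ |x| := fun i =>
  (Finset.abs_sum_le_sum_abs _ _).trans <| Finset.sum_le_sum fun j _ => by
    rw [abs_mul]
    exact mul_le_mul_of_nonneg_right (hBC i j) (abs_nonneg _)

theorem tendsto_pow_mulVec_nhds_zero {α : Type*} [Semiring α] [TopologicalSpace α]
    [IsTopologicalSemiring α] [DecidableEq ι] {M : Matrix ι ι α}
    (hM : Tendsto (M ^ ·) atTop (𝓝 0)) (v : ι → α) :
    Tendsto (fun k => (M ^ k) *ᵥ v) atTop (𝓝 0) := by
  have hcont : Continuous fun N : Matrix ι ι α => N *ᵥ v := by fun_prop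
  exact (hcont.tendsto' 0 0 (zero_mulVec v)).comp hM

variable [DecidableEq ι]

theorem isUnit_one_sub_of_tendsto_pow {K : Type*} [Field K] [TopologicalSpace K]
    [IsTopologicalRing K] [T2Space K] {M : Matrix ι ι K}
    (hM : Tendsto (M ^ ·) atTop (𝓝 0)) : IsUnit (1 - M) := by
  rw [← mulVec_injective_iff_isUnit, ← coe_mulVecLin, injective_iff_map_eq_zero]
  intro v hv
  have hfix : M *ᵥ v = v := by
    rw [mulVecLin_apply, sub_mulVec, one_mulVec, sub_eq_zero] at hv
    exact hv.symm
  have hpow : ∀ k, (M ^ k) *ᵥ v = v := by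
    intro k
    induction k with
    | zero => simp
    | succ k ih => rw [pow_succ, ← mulVec_mulVec, hfix, ih]
  simpa [hpow] using tendsto_pow_mulVec_nhds_zero hM v

section OrderedField

variable {K : Type*} [Field K] [LinearOrder K] [IsStrictOrderedRing K] [TopologicalSpace K]
  [OrderTopology K]

theorem nonneg_of_mulVec_le_self {M : Matrix ι ι K} (hM : ∀ i j, 0 ≤ M i j)
    (hlim : Tendsto (M ^ ·) atTop (𝓝 0)) {z : ι → K} (hz : M *ᵥ z ≤ z) : 0 ≤ z := by
  have hpow : ∀ k, (M ^ k) *ᵥ z ≤ z := by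
    intro k
    induction k with
    | zero => simp
    | succ k ih =>
      rw [pow_succ, ← mulVec_mulVec]
      exact (mulVec_le_mulVec_of_nonneg (pow_apply_nonneg hM k) hz).trans ih
  exact le_of_tendsto' (tendsto_pow_mulVec_nhds_zero hlim z) hpow

theorem le_inv_mulVec_of_sub_mulVec_le {M : Matrix ι ι K} (hM : ∀ i j, 0 ≤ M i j)
    (hlim : Tendsto (M ^ ·) atTop (𝓝 0)) {y c : ι → K} (hy : y - M *ᵥ y ≤ c) :
    y ≤ (1 - M)⁻¹ *ᵥ c := by
  set u := (1 - M)⁻¹ *ᵥ c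
  have hu : u - M *ᵥ u = c := by
    have := (isUnit_iff_isUnit_det _).mp (isUnit_one_sub_of_tendsto_pow hlim)
    have hu' : (1 - M) *ᵥ u = c := by rw [mulVec_mulVec, mul_nonsing_inv _ this, one_mulVec]
    rwa [sub_mulVec, one_mulVec] at hu'
  have hdiff : (u - y) - M *ᵥ (u - y) = c - (y - M *ᵥ y) := by
    rw [mulVec_sub, ← hu]
    abel
  have : M *ᵥ (u - y) ≤ u - y := sub_nonneg.mp (hdiff ▸ sub_nonneg.mpr hy)
  exact sub_nonneg.mp (nonneg_of_mulVec_le_self hM hlim this)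

end OrderedField

theorem abs_sub_mulVec_abs_le_abs_mulVec {α : Type*} [Ring α] [LinearOrder α]
    [IsStrictOrderedRing α] {A Δ : Matrix ι ι α} (hA : ∀ i j, |(A - 1) i j| ≤ Δ i j)
    (x : ι → α) : |x| - Δ *ᵥ |x| ≤ |A *ᵥ x| := by
  intro i
  have hx : x i = (A *ᵥ x) i - ((A - 1) *ᵥ x) i := by
    rw [sub_mulVec, one_mulVec, Pi.sub_apply, sub_sub_cancel]
  have hAx := abs_mulVec_le_mulVec_abs hA x i
  have htri := abs_sub ((A *ᵥ x) i) (((A - 1) *ᵥ x) i)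
  rw [← hx] at htri
  exact sub_le_iff_le_add.mpr (htri.trans (add_le_add_right hAx _))

end Matrix

theorem abs_sub_one_le_of_mem_Icc {ι K : Type*} [DecidableEq ι] [Field K] [LinearOrder K]
    [IsStrictOrderedRing K] {Alo Ahi A : Matrix ι ι K} (hmid : (2 : K)⁻¹ • (Alo + Ahi) = 1)
    (hA : ∀ i j, A i j ∈ Set.Icc (Alo i j) (Ahi i j)) (i j : ι) :
    |(A - 1) i j| ≤ ((2 : K)⁻¹ • (Ahi - Alo)) i j := by
  obtain ⟨hlo, hhi⟩ := hA i j
  have h1 : (1 : Matrix ι ι K) i j = 2⁻¹ * (Alo i j + Ahi i j) := by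
    rw [← hmid, Matrix.smul_apply, Matrix.add_apply, smul_eq_mul]
  rw [Matrix.sub_apply, h1, Matrix.smul_apply, Matrix.sub_apply, smul_eq_mul]
  exact abs_le.mpr ⟨by linarith, by linarith⟩

theorem solution_set_bounded_and_magnitude_general
    (n : ℕ) (Alo Ahi Δ : Matrix (Fin n) (Fin n) ℝ) (blo bhi : Fin n → ℝ)
    (hAlo : ∀ i j, Alo i j ≤ Ahi i j)
    (hmid : (2 : ℝ)⁻¹ • (Alo + Ahi) = 1)
    (hrad : Δ = (2 : ℝ)⁻¹ • (Ahi - Alo))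
    (hρ : ∀ μ ∈ spectrum ℂ (Δ.map Complex.ofReal), ‖μ‖ < 1)
    (sol : Set (Fin n → ℝ))
    (hsol : sol = {x | ∃ A : Matrix (Fin n) (Fin n) ℝ, ∃ b : Fin n → ℝ,
      (∀ i j, A i j ∈ Set.Icc (Alo i j) (Ahi i j)) ∧
      (∀ i, b i ∈ Set.Icc (blo i) (bhi i)) ∧ A.mulVec x = b})
    (u : Fin n → ℝ)
    (hu : u = (1 - Δ)⁻¹.mulVec (fun i => max |blo i| |bhi i|)) :
    Bornology.IsBounded sol ∧ ∀ x ∈ sol, ∀ i, |x i| ≤ u i := by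
  have hΔ : ∀ i j, 0 ≤ Δ i j := fun i j => by
    have := hAlo i j
    simp only [hrad, Matrix.smul_apply, Matrix.sub_apply, smul_eq_mul]
    linarith
  have hlim := Matrix.tendsto_pow_nhds_zero_of_forall_spectrum_norm_lt_one hρ
  have hmag : ∀ x ∈ sol, |x| ≤ u := by
    intro x hx
    obtain ⟨A, b, hA, hb, hAx⟩ := hsol ▸ hx
    rw [hu]
    refine Matrix.le_inv_mulVec_of_sub_mulVec_le hΔ hlim ?_
    have hA1 : ∀ i j, |(A - 1) i j| ≤ Δ i j := hrad ▸ abs_sub_one_le_of_mem_Icc hmid hA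
    refine (Matrix.abs_sub_mulVec_abs_le_abs_mulVec hA1 x).trans ?_
    rw [hAx]
    exact fun i => abs_le_max_abs_abs (hb i).1 (hb i).2
  refine ⟨(Metric.isBounded_Icc (-u) u).subset fun x hx => ?_, fun x hx i => hmag x hx i⟩
  obtain ⟨hle, hneg⟩ := abs_le'.mp (hmag x hx)
  exact ⟨neg_le.mp hneg, hle⟩

/-- For an interval system with `mid(A) = I` and `ρ(rad A) < 1`, the
solution set is bounded and its magnitude is bounded by `u = (I - rad A)⁻¹ mag(b)`. -/
theorem solution_set_bounded_and_magnitude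
    (n : ℕ) (Alo Ahi Δ : Matrix (Fin n) (Fin n) ℝ) (blo bhi : Fin n → ℝ)
    (hAlo : ∀ i j, Alo i j ≤ Ahi i j) (hblo : ∀ i, blo i ≤ bhi i)
    (hmid : (2 : ℝ)⁻¹ • (Alo + Ahi) = 1)
    (hrad : Δ = (2 : ℝ)⁻¹ • (Ahi - Alo))
    (hρ : ∀ μ ∈ spectrum ℂ (Δ.map Complex.ofReal), ‖μ‖ < 1)
    (sol : Set (Fin n → ℝ))
    (hsol : sol = {x | ∃ A : Matrix (Fin n) (Fin n) ℝ, ∃ b : Fin n → ℝ,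
      (∀ i j, A i j ∈ Set.Icc (Alo i j) (Ahi i j)) ∧
      (∀ i, b i ∈ Set.Icc (blo i) (bhi i)) ∧ A.mulVec x = b})
    (u : Fin n → ℝ)
    (hu : u = (1 - Δ)⁻¹.mulVec (fun i => max |blo i| |bhi i|)) :
    Bornology.IsBounded sol ∧ ∀ x ∈ sol, ∀ i, |x i| ≤ u i :=
  solution_set_bounded_and_magnitude_general n Alo Ahi Δ blo bhi hAlo hmid hrad hρ sol hsol u hu
end
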